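/- The section map from Stab_G(1) to G sending g to its section g₁ at the first-level vertex 1 is a surjective group homomorphism, where Stab_G(1) is the stabilizer in G of the first-level vertex 1. -/

import Mathlib

/-!
Setup: the automorphism group `Aut(T₈)` of the rooted 8-regular tree, realized
as the group of *portraits*: an automorphism is determined by the permutation
of `{1,…,8}` (here `Fin 8`) that it induces below each vertex (a finite word
over the alphabet).  Composition is written left-to-right: `p * q` acts by
first applying `p`, then `q` (this is the convention of the paper, where a
word `a b a b⁻¹ a` acts by applying `a` first).
-/

namespace T8

/-- The root permutation of the generator `a` : `(34)(67)(58)` on letters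
`1,…,8`, written `0`-indexed on `Fin 8` as `(2 3)(5 6)(4 7)`. -/
def σa : Equiv.Perm (Fin 8) := Equiv.swap 2 3 * Equiv.swap 5 6 * Equiv.swap 4 7

/-- The root permutation of the generator `b` : `(123)(456)` on letters
`1,…,8`, written `0`-indexed on `Fin 8` as `(0 1 2)(3 4 5)`. -/
def σb : Equiv.Perm (Fin 8) :=
  (Equiv.swap 0 1 * Equiv.swap 1 2) * (Equiv.swap 3 4 * Equiv.swap 4 5)

/-- An automorphism of the rooted `8`-regular tree, given by its portrait:
for each vertex `v` (a finite word over the `8`-letter alphabet), the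
permutation induced on the letters just below `v`. -/
@[ext] structure Aut where
  val : List (Fin 8) → Equiv.Perm (Fin 8)

/-- The section (state) of a tree automorphism at a first-level vertex `i`. -/
def sect (p : Aut) (i : Fin 8) : Aut := ⟨fun v => p.val (i :: v)⟩

/-- The section of a tree automorphism at an arbitrary vertex (word) `v`. -/
def sectWord (p : Aut) : List (Fin 8) → Aut
  | [] => p
  | i :: t => sectWord (sect p i) t

/-- The action of a tree automorphism on vertices:
`p (i·w) = (σ_p i) · (p_i w)` where `σ_p = p.val []` is the root permutation
and `p_i` is the section at `i`.  This is length- and prefix-preserving. -/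
def act : Aut → List (Fin 8) → List (Fin 8)
  | _, [] => []
  | p, i :: t => p.val [] i :: act (sect p i) t

/-- The action of the inverse of a tree automorphism on vertices. -/
def actInv : Aut → List (Fin 8) → List (Fin 8)
  | _, [] => []
  | p, i :: t => (p.val [])⁻¹ i :: actInv (sect p ((p.val [])⁻¹ i)) t

instance : One Aut := ⟨⟨fun _ => 1⟩⟩
instance : Mul Aut := ⟨fun p q => ⟨fun v => q.val (act p v) * p.val v⟩⟩
instance : Inv Aut := ⟨fun p => ⟨fun v => (p.val (actInv p v))⁻¹⟩⟩

@[simp] lemma one_val (v : List (Fin 8)) : (1 : Aut).val v = 1 := rfl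
@[simp] lemma mul_val (p q : Aut) (v : List (Fin 8)) :
    (p * q).val v = q.val (act p v) * p.val v := rfl
@[simp] lemma inv_val (p : Aut) (v : List (Fin 8)) :
    (p⁻¹).val v = (p.val (actInv p v))⁻¹ := rfl

@[simp] lemma sect_one (i : Fin 8) : sect 1 i = 1 := rfl

lemma sect_mul (p q : Aut) (i : Fin 8) :
    sect (p * q) i = sect p i * sect q (p.val [] i) := rfl

lemma sect_inv (p : Aut) (i : Fin 8) :
    sect p⁻¹ i = (sect p ((p.val [])⁻¹ i))⁻¹ := rfl

lemma act_one : ∀ v : List (Fin 8), act (1 : Aut) v = v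
  | [] => rfl
  | i :: t => by
    show (1 : Equiv.Perm (Fin 8)) i :: act (sect 1 i) t = i :: t
    rw [sect_one, act_one t, Equiv.Perm.one_apply]

lemma act_mul : ∀ (v : List (Fin 8)) (p q : Aut),
    act (p * q) v = act q (act p v)
  | [], _, _ => rfl
  | i :: t, p, q => by
    show (p * q).val [] i :: act (sect (p * q) i) t
        = act q (p.val [] i :: act (sect p i) t)
    rw [sect_mul, act_mul t]
    show (q.val (act p []) * p.val []) i :: _
        = q.val [] (p.val [] i) :: act (sect q (p.val [] i)) (act (sect p i) t)
    rfl

lemma act_inv : ∀ (v : List (Fin 8)) (p : Aut), act p⁻¹ v = actInv p v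
  | [], _ => rfl
  | i :: t, p => by
    show (p⁻¹).val [] i :: act (sect p⁻¹ i) t
        = (p.val [])⁻¹ i :: actInv (sect p ((p.val [])⁻¹ i)) t
    rw [sect_inv, act_inv t]
    rfl

lemma actInv_act : ∀ (v : List (Fin 8)) (p : Aut), actInv p (act p v) = v
  | [], _ => rfl
  | i :: t, p => by
    show (p.val [])⁻¹ (p.val [] i) ::
        actInv (sect p ((p.val [])⁻¹ (p.val [] i))) (act (sect p i) t) = i :: t
    rw [Equiv.Perm.inv_def, Equiv.symm_apply_apply, actInv_act t]

lemma act_actInv : ∀ (v : List (Fin 8)) (p : Aut), act p (actInv p v) = v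
  | [], _ => rfl
  | i :: t, p => by
    show p.val [] ((p.val [])⁻¹ i) ::
        act (sect p ((p.val [])⁻¹ i)) (actInv (sect p ((p.val [])⁻¹ i)) t) = i :: t
    rw [Equiv.Perm.inv_def, Equiv.apply_symm_apply, act_actInv t]

instance : Group Aut where
  mul_assoc p q r := by
    ext v i
    simp [mul_val, act_mul, mul_assoc]
  one_mul p := by
    ext v i
    simp [mul_val, act_one]
  mul_one p := by
    ext v i
    simp [mul_val]
  inv_mul_cancel p := by
    ext v i
    simp [mul_val, inv_val, act_inv, actInv_act]

/-- The portrait of the generator `a = ⟨a, 1, 1, 1, 1, 1, 1, 1⟩ (34)(67)(58)`: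
root permutation `σa`, section `a` at the first letter, trivial sections
elsewhere. -/
def aval : List (Fin 8) → Equiv.Perm (Fin 8)
  | [] => σa
  | i :: t => if i = 0 then aval t else 1

/-- The generator `a = ⟨a, 1, 1, 1, 1, 1, 1, 1⟩ (34)(67)(58)`. -/
def a : Aut := ⟨aval⟩

/-- The portraits of the generator `b` (for `tt`) and of `b⁻¹` (for `ff`):
`b = ⟨1, 1, 1, 1, 1, 1, b, b⁻¹⟩ (123)(456)` and
`b⁻¹ = ⟨1, 1, 1, 1, 1, 1, b⁻¹, b⟩ (132)(465)`. -/
def bval : Bool → List (Fin 8) → Equiv.Perm (Fin 8)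
  | s, [] => if s then σb else σb⁻¹
  | s, i :: t => if i = 6 then bval s t else if i = 7 then bval (!s) t else 1

/-- The generator `b = ⟨1, 1, 1, 1, 1, 1, b, b⁻¹⟩ (123)(456)`. -/
def b : Aut := ⟨bval true⟩

/-- Sanity: the first section of `a` is `a` itself. -/
lemma sect_a_zero : sect a 0 = a := rfl

/-- Sanity: the section of `b` at the letter `7` (index `6`) is `b` itself. -/
lemma sect_b_six : sect b 6 = b := rfl

/-- The group `G = ⟨a, b⟩ = ⟨a, b, b⁻¹⟩ ≤ Aut(T₈)` of the paper. -/
def G : Subgroup Aut := Subgroup.closure {a, b}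

lemma a_mem : a ∈ G := Subgroup.subset_closure (Set.mem_insert _ _)

lemma b_mem : b ∈ G := Subgroup.subset_closure (Set.mem_insert_of_mem _ rfl)

end T8

namespace T8

/-- The stabilizer of the first-level vertex `1` (the word `[0]`) in `Aut(T₈)`. -/
def stab1 : Subgroup Aut where
  carrier := {p | act p [0] = [0]}
  one_mem' := by
    show act (1 : Aut) [0] = [0]
    rw [act_one]
  mul_mem' := by
    intro p q hp hq
    simp only [Set.mem_setOf_eq] at *
    rw [act_mul, hp, hq]
  inv_mem' := by
    intro p hp
    simp only [Set.mem_setOf_eq] at *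
    rw [act_inv]
    conv_lhs => rw [← hp]
    rw [actInv_act]

/-!
Sections at a vertex fixed by both factors multiply, so `g ↦ g₁` is a homomorphism on the
stabilizer of `1`. Its values lie in `G` because `G` is self-similar: every section of `a` and
of `b` is `a`, `b`, `b⁻¹` or trivial. The image is a subgroup containing `a = a₁` and
`b = (c b c⁻¹)₁`, where `c ∈ G` carries the vertex `1` to `7` with trivial section at `1` and
`b` fixes `7` with section `b` there; hence it is all of `G`.
-/

lemma mem_stab1_iff {p : Aut} : p ∈ stab1 ↔ p.val [] 0 = 0 :=
  List.singleton_inj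

lemma sect_mul_of_mem_stab1 {p : Aut} (hp : p ∈ stab1) (q : Aut) :
    sect (p * q) 0 = sect p 0 * sect q 0 := by
  rw [sect_mul, mem_stab1_iff.mp hp]

def sectZeroHom : stab1 →* Aut :=
  MonoidHom.mk' (fun p => sect p 0) fun p q => sect_mul_of_mem_stab1 p.2 q

lemma root_conj_of_fixed {p q : Aut} {i j : Fin 8} (hp : p.val [] i = j)
    (hq : q.val [] j = j) : (p * q * p⁻¹).val [] i = i := by
  show (p.val [])⁻¹ (q.val [] (p.val [] i)) = i
  rw [hp, hq, Equiv.Perm.inv_eq_iff_eq, hp]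

lemma sect_conj_of_fixed {p q : Aut} {i j : Fin 8} (hp : p.val [] i = j)
    (hq : q.val [] j = j) : sect (p * q * p⁻¹) i = sect p i * sect q j * (sect p i)⁻¹ := by
  have hpq : (p * q).val [] i = j := by
    show q.val [] (p.val [] i) = j
    rw [hp, hq]
  rw [sect_mul, sect_mul, sect_inv, hpq, hp, Equiv.Perm.inv_eq_iff_eq.mpr hp.symm]

lemma sect_mem_closure {s : Set Aut}
    (hs : ∀ x ∈ s, ∀ i, sect x i ∈ Subgroup.closure s) {p : Aut}
    (hp : p ∈ Subgroup.closure s) (i : Fin 8) : sect p i ∈ Subgroup.closure s := by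
  induction hp using Subgroup.closure_induction generalizing i with
  | mem x hx => exact hs x hx i
  | one => exact one_mem _
  | mul p q _ _ hp hq =>
    rw [sect_mul]
    exact mul_mem (hp i) (hq _)
  | inv p _ hp =>
    rw [sect_inv]
    exact inv_mem (hp _)

lemma bval_not_mul_bval : ∀ (v : List (Fin 8)) (s : Bool),
    bval (!s) (act ⟨bval s⟩ v) * bval s v = 1
  | [], s => by cases s <;> simp [bval, act]
  | i :: t, s => by
    fin_cases i <;> cases s <;>
      first
        | rfl
        | exact bval_not_mul_bval t true
        | exact bval_not_mul_bval t false

lemma mk_bval_false : (⟨bval false⟩ : Aut) = b⁻¹ :=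
  eq_inv_of_mul_eq_one_right <| Aut.ext <| funext fun v => bval_not_mul_bval v true

lemma sect_a_mem (i : Fin 8) : sect a i ∈ G := by
  fin_cases i
  · exact a_mem
  all_goals exact one_mem G

lemma sect_b_mem (i : Fin 8) : sect b i ∈ G := by
  fin_cases i
  any_goals exact one_mem G
  · exact b_mem
  · show (⟨bval false⟩ : Aut) ∈ G
    rw [mk_bval_false]
    exact inv_mem b_mem

lemma sect_mem_G {p : Aut} (hp : p ∈ G) (i : Fin 8) : sect p i ∈ G := by
  refine sect_mem_closure ?_ hp i
  rintro x (rfl | rfl)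
  · exact sect_a_mem
  · exact sect_b_mem

-- The root permutations carry `0 ↦ 1 ↦ 2 ↦ 3 ↦ 4 ↦ 5 ↦ 6`, along which every section is trivial.
def c : Aut := b * b * a * b * b * a

lemma c_mem : c ∈ G :=
  mul_mem (mul_mem (mul_mem (mul_mem (mul_mem b_mem b_mem) a_mem) b_mem) b_mem) a_mem

lemma root_c : c.val [] 0 = 6 := rfl

lemma sect_c : sect c 0 = 1 := rfl

lemma sect_conj_c_b : sect (c * b * c⁻¹) 0 = b := by
  rw [sect_conj_of_fixed root_c rfl, sect_c, sect_b_six, one_mul, inv_one, mul_one]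

lemma G_le_range_sectZeroHom :
    G ≤ (sectZeroHom.comp (Subgroup.inclusion (inf_le_right : G ⊓ stab1 ≤ stab1))).range := by
  refine (Subgroup.closure_le _).mpr ?_
  rintro x (rfl | rfl)
  · exact ⟨⟨a, Subgroup.mem_inf.mpr ⟨a_mem, mem_stab1_iff.mpr rfl⟩⟩, rfl⟩
  · have hG : c * b * c⁻¹ ∈ G := mul_mem (mul_mem c_mem b_mem) (inv_mem c_mem)
    have hstab : c * b * c⁻¹ ∈ stab1 := mem_stab1_iff.mpr (root_conj_of_fixed root_c rfl)
    exact ⟨⟨c * b * c⁻¹, Subgroup.mem_inf.mpr ⟨hG, hstab⟩⟩, sect_conj_c_b⟩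

/-- the section map `Stab_G(1) → G`, `g ↦ g₁`, is a surjective
group homomorphism, where `Stab_G(1) = G ⊓ stab1` is the stabilizer in `G`
of the first-level vertex `1`. -/
theorem stmt_8 :
    ∃ φ : ↥(G ⊓ stab1) →* ↥G,
      Function.Surjective φ ∧
      ∀ g : ↥(G ⊓ stab1), (φ g : Aut) = sect (g : Aut) 0 := by
  let ψ := sectZeroHom.comp (Subgroup.inclusion (inf_le_right : G ⊓ stab1 ≤ stab1))
  refine ⟨ψ.codRestrict G fun g => sect_mem_G g.2.1 0, fun y => ?_, fun g => rfl⟩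
  obtain ⟨g, hg⟩ := G_le_range_sectZeroHom y.2
  exact ⟨g, Subtype.ext hg⟩

end T8
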